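/- Let (P, A, λ) be a marked poset and let x be a vertex (extreme point) of the marked order polytope O_{P,A}(λ). Then every coordinate of x lies in the set {λ(a) : a ∈ A}; i.e. for every p ∈ P∖A there exists a ∈ A with x(p) = λ(a). -/

import Mathlib

/-!
If a coordinate `c = x p` of a point `x` of the polytope is not a marking, then moving all
coordinates of `x` equal to `c` simultaneously by a small `t` of either sign keeps `x̂`
order-preserving: comparable elements with equal values move together, and strict
inequalities survive small perturbations since there are only finitely many of them.
So `x` is the midpoint of two distinct points of the polytope and is not a vertex.
-/

open Classical in
/-- The extension of `x : P∖A → ℝ` to all of `P`, taking the value `lam a` on marked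
elements `a ∈ A`. -/
noncomputable def mopExtend {P : Type*} (A : Set P) (lam : A → ℝ)
    (x : {p : P // p ∉ A} → ℝ) : P → ℝ :=
  fun p => if h : p ∈ A then lam ⟨p, h⟩ else x ⟨p, h⟩

/-- The marked order polytope of the marked poset `(P, A, lam)`, realized in `ℝ^{P∖A}`. -/
def markedOrderPolytope {P : Type*} [PartialOrder P] (A : Set P) (lam : A → ℝ) :
    Set ({p : P // p ∉ A} → ℝ) :=
  {x | ∀ p q : P, p ≤ q → mopExtend A lam x p ≤ mopExtend A lam x q}

open Filter Topology

theorem eq_zero_of_mem_extremePoints_of_sub_mem_of_add_mem {E : Type*} [AddCommGroup E]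
    [Module ℝ E] {s : Set E} {x v : E} (hx : x ∈ s.extremePoints ℝ) (hsub : x - v ∈ s)
    (hadd : x + v ∈ s) : v = 0 := by
  simpa using hx.2 hsub hadd (mem_openSegment_sub_add x v)

theorem eq_zero_of_mem_extremePoints_of_eventually_add_smul_mem {E : Type*} [AddCommGroup E]
    [Module ℝ E] {s : Set E} {x v : E} (hx : x ∈ s.extremePoints ℝ)
    (hv : ∀ᶠ t in 𝓝 (0 : ℝ), x + t • v ∈ s) : v = 0 := by
  have hneg : ∀ᶠ t in 𝓝 (0 : ℝ), x + (-t) • v ∈ s :=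
    (continuous_neg.tendsto' (0 : ℝ) 0 neg_zero).eventually hv
  obtain ⟨t, ⟨hplus, hminus⟩, ht⟩ :=
    ((hv.and hneg).filter_mono nhdsWithin_le_nhds).and
      (self_mem_nhdsWithin (s := {0}ᶜ)) |>.exists
  have htv : t • v = 0 :=
    eq_zero_of_mem_extremePoints_of_sub_mem_of_add_mem hx
      (by simpa [sub_eq_add_neg] using hminus) hplus
  exact (smul_eq_zero.mp htv).resolve_left ht

theorem eventually_monotone_add_smul_indicator_level {P : Type*} [Preorder P] [Finite P]
    {f : P → ℝ} (hf : Monotone f) (c : ℝ) :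
    ∀ᶠ t in 𝓝 (0 : ℝ), Monotone (f + t • {u | f u = c}.indicator 1) := by
  simp only [Monotone, eventually_all]
  intro u v huv
  set δ := {u | f u = c}.indicator (1 : P → ℝ)
  rcases (hf huv).eq_or_lt with heq | hlt
  · refine Eventually.of_forall fun t => le_of_eq ?_
    simp [δ, Set.indicator_apply, heq]
  · have hcont : ∀ w, Continuous fun t : ℝ => f w + t * δ w := fun w => by fun_prop
    exact (hcont u).continuousAt.eventually_lt (hcont v).continuousAt (by simpa using hlt)
      |>.mono fun t ht => by simpa using ht.le

section MarkedOrderPolytope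

variable {P : Type*} {A : Set P} {lam : A → ℝ}

theorem mem_markedOrderPolytope_iff_monotone [PartialOrder P] {x : {p : P // p ∉ A} → ℝ} :
    x ∈ markedOrderPolytope A lam ↔ Monotone (mopExtend A lam x) :=
  Iff.rfl

theorem mopExtend_add_smul_indicator_level {x : {p : P // p ∉ A} → ℝ} {c : ℝ}
    (hc : ∀ a, lam a ≠ c) (t : ℝ) :
    mopExtend A lam (x + t • {q | x q = c}.indicator 1) =
      mopExtend A lam x + t • {u | mopExtend A lam x u = c}.indicator 1 := by
  funext u
  by_cases hu : u ∈ A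
  · simp [mopExtend, hu, hc]
  · simp [mopExtend, hu, Set.indicator_apply]

theorem eventually_add_smul_indicator_level_mem_markedOrderPolytope [PartialOrder P]
    [Finite P] {x : {p : P // p ∉ A} → ℝ} (hx : x ∈ markedOrderPolytope A lam) {c : ℝ}
    (hc : ∀ a, lam a ≠ c) :
    ∀ᶠ t in 𝓝 (0 : ℝ),
      x + t • {q | x q = c}.indicator 1 ∈ markedOrderPolytope A lam := by
  simp only [mem_markedOrderPolytope_iff_monotone, mopExtend_add_smul_indicator_level hc]
  exact eventually_monotone_add_smul_indicator_level hx c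

end MarkedOrderPolytope

theorem statement1_general {P : Type*} [Fintype P] [PartialOrder P]
    (A : Set P) (lam : A → ℝ)
    (x : {p : P // p ∉ A} → ℝ)
    (hx : x ∈ (markedOrderPolytope A lam).extremePoints ℝ) :
    ∀ p : {p : P // p ∉ A}, ∃ a : A, x p = lam a := by
  intro p
  by_contra! hp
  have hzero : {q | x q = x p}.indicator (1 : {p : P // p ∉ A} → ℝ) = 0 :=
    eq_zero_of_mem_extremePoints_of_eventually_add_smul_mem hx
      (eventually_add_smul_indicator_level_mem_markedOrderPolytope hx.1 fun a h => hp a h.symm)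
  simpa using congrFun hzero p

/-- Every coordinate of a vertex of a marked order polytope is equal to one of the
markings `lam a`. -/
theorem statement1 {P : Type*} [Fintype P] [PartialOrder P]
    (A : Set P) (lam : A → ℝ)
    (hAmin : ∀ p : P, IsMin p → p ∈ A) (hAmax : ∀ p : P, IsMax p → p ∈ A)
    (hlam : ∀ a b : A, (a : P) ≤ (b : P) → lam a ≤ lam b)
    (x : {p : P // p ∉ A} → ℝ)
    (hx : x ∈ (markedOrderPolytope A lam).extremePoints ℝ) :
    ∀ p : {p : P // p ∉ A}, ∃ a : A, x p = lam a :=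
  statement1_general A lam x hx
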